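/- Nonnegativity and faithfulness of observational divergence: Let ρ and σ be quantum states on ℂ^n with supp(ρ) ⊆ supp(σ). Then D(ρ‖σ) ≥ 0, and D(ρ‖σ) = 0 if and only if ρ = σ. -/

import Mathlib

open Matrix BigOperators
open scoped ComplexOrder

noncomputable section

/-- A quantum state: positive semidefinite matrix with unit trace. -/
def IsState {d : Type*} [Fintype d] (ρ : Matrix d d ℂ) : Prop :=
  ρ.PosSemidef ∧ ρ.trace = 1

/-- `SuppLE ρ σ` : the support of `ρ` is contained in the support of `σ`,
expressed as inclusion of kernels the other way. -/
def SuppLE {d : Type*} [Fintype d] (ρ σ : Matrix d d ℂ) : Prop :=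
  ∀ v : d → ℂ, σ *ᵥ v = 0 → ρ *ᵥ v = 0

/-- Matrix logarithm: apply `Real.log` to the eigenvalues (with `log 0 = 0`). -/
noncomputable def matLog {d : Type*} [Fintype d] [DecidableEq d]
    (ρ : Matrix d d ℂ) : Matrix d d ℂ :=
  if h : ρ.IsHermitian then
    (h.eigenvectorUnitary : Matrix d d ℂ) *
      Matrix.diagonal (fun i => (Real.log (h.eigenvalues i) : ℂ)) *
      (star (h.eigenvectorUnitary : Matrix d d ℂ))
  else 0

/-- Quantum relative entropy `S(ρ‖σ) = Re Tr (ρ (log ρ - log σ))`. -/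
noncomputable def relEnt {d : Type*} [Fintype d] [DecidableEq d]
    (ρ σ : Matrix d d ℂ) : ℝ :=
  (Matrix.trace (ρ * (matLog ρ - matLog σ))).re

/-- Trace norm of a Hermitian matrix: sum of absolute values of eigenvalues. -/
noncomputable def traceNorm {d : Type*} [Fintype d] [DecidableEq d]
    (A : Matrix d d ℂ) : ℝ :=
  if h : A.IsHermitian then ∑ i, |h.eigenvalues i| else 0

/-- Rank-one operator `|ψ⟩⟨ψ|`. -/
def ketbra {d : Type*} (ψ : d → ℂ) : Matrix d d ℂ :=
  Matrix.of fun a b => ψ a * (starRingEnd ℂ) (ψ b)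

/-- A POVM element: a positive semidefinite matrix `F` with `1 - F` positive semidefinite. -/
def IsPOVMElem {d : Type*} [Fintype d] [DecidableEq d] (F : Matrix d d ℂ) : Prop :=
  F.PosSemidef ∧ ((1 : Matrix d d ℂ) - F).PosSemidef

/-- `trR F ρ = Re Tr (F ρ)`. -/
noncomputable def trR {d : Type*} [Fintype d] (F ρ : Matrix d d ℂ) : ℝ :=
  (Matrix.trace (F * ρ)).re

/-- Observational divergence `D(ρ‖σ)`. -/
noncomputable def obsDiv {d : Type*} [Fintype d] [DecidableEq d]
    (ρ σ : Matrix d d ℂ) : ℝ :=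
  sSup {x : ℝ | ∃ F : Matrix d d ℂ, IsPOVMElem F ∧ trR F σ ≠ 0 ∧
    x = trR F ρ * Real.logb 2 (trR F ρ / trR F σ)}

/-- A probability distribution on `Fin n`. -/
def IsProbDist {n : ℕ} (P : Fin n → ℝ) : Prop :=
  (∀ i, 0 ≤ P i) ∧ ∑ i, P i = 1

/-- Classical relative entropy (base 2); terms with `P i = 0` contribute `0`. -/
noncomputable def cRelEnt {n : ℕ} (P Q : Fin n → ℝ) : ℝ :=
  ∑ i, P i * Real.logb 2 (P i / Q i)

/-- Classical observational divergence. -/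
noncomputable def cObsDiv {n : ℕ} (P Q : Fin n → ℝ) : ℝ :=
  sSup {x : ℝ | ∃ f : Fin n → ℝ, (∀ i, 0 ≤ f i ∧ f i ≤ 1) ∧
    (∑ i, f i * Q i) ≠ 0 ∧
    x = (∑ i, f i * P i) * Real.logb 2 ((∑ i, f i * P i) / (∑ i, f i * Q i))}

/-!
Support inclusion gives `ρ ≤ c • σ` in the Loewner order: `ρ` equals its compression `P ρ P` by the
support projection `P` of `σ`, and `P ≤ m⁻¹ • σ` for the least positive eigenvalue `m` of `σ`.
Hence `Tr(Fρ) ≤ c Tr(Fσ)` for every POVM element `F`, every term of the supremum is at most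
`|log₂ c|`, and `F = 1` contributes the term `0`. If `ρ ≠ σ`, the spectral projection `F` of the
traceless matrix `ρ - σ` onto its positive part has `Tr(Fρ) > Tr(Fσ) > 0`, a positive term.
-/

open scoped MatrixOrder

lemma Real.mul_logb_div_le_abs_logb {b p q c : ℝ} (hb : 1 < b) (hp₀ : 0 ≤ p) (hp₁ : p ≤ 1)
    (hq : 0 < q) (hpq : p ≤ c * q) : p * Real.logb b (p / q) ≤ |Real.logb b c| := by
  rcases hp₀.eq_or_lt with rfl | hp
  · simp
  calc p * Real.logb b (p / q) ≤ p * |Real.logb b c| := by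
        gcongr
        exact (Real.logb_le_logb_of_le hb (div_pos hp hq) ((div_le_iff₀ hq).mpr hpq)).trans
          (le_abs_self _)
    _ ≤ |Real.logb b c| := mul_le_of_le_one_left (abs_nonneg _) hp₁

section
variable {d : Type*} [Fintype d] {𝕜 : Type*} [RCLike 𝕜]

lemma trR_comm (F A : Matrix d d ℂ) : trR F A = trR A F := by
  rw [trR, trR, Matrix.trace_mul_comm]

lemma trR_sub (F A B : Matrix d d ℂ) : trR F (A - B) = trR F A - trR F B := by
  simp [trR, Matrix.mul_sub]

lemma trR_smul (F A : Matrix d d ℂ) (c : ℝ) : trR F (c • A) = c * trR F A := by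
  simp [trR]

lemma SuppLE.mul_eq_zero {e : Type*} [Fintype e] {ρ σ : Matrix d d ℂ} {M : Matrix d e ℂ}
    (h : SuppLE ρ σ) (hM : σ * M = 0) : ρ * M = 0 := by
  refine Matrix.ext_iff_mulVec.mpr fun v => ?_
  rw [← Matrix.mulVec_mulVec, Matrix.zero_mulVec]
  exact h _ (by rw [Matrix.mulVec_mulVec, hM, Matrix.zero_mulVec])

variable [DecidableEq d]

lemma Matrix.trace_mul_nonneg {F A : Matrix d d 𝕜} (hF : 0 ≤ F)
    (hA : 0 ≤ A) : 0 ≤ (F * A).trace := by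
  obtain ⟨B, rfl⟩ := CStarAlgebra.nonneg_iff_eq_star_mul_self.mp hF
  rw [Matrix.mul_assoc, Matrix.trace_mul_comm, Matrix.star_eq_conjTranspose]
  exact (hA.posSemidef.mul_mul_conjTranspose_same B).trace_nonneg

lemma trR_one (A : Matrix d d ℂ) : trR 1 A = A.trace.re := by
  rw [trR, Matrix.one_mul]

lemma trR_nonneg {F A : Matrix d d ℂ} (hF : 0 ≤ F) (hA : 0 ≤ A) : 0 ≤ trR F A :=
  (Complex.nonneg_iff.mp (Matrix.trace_mul_nonneg hF hA)).1

lemma trR_mono {F A B : Matrix d d ℂ} (hF : 0 ≤ F) (hAB : A ≤ B) : trR F A ≤ trR F B := by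
  simpa [trR_sub] using trR_nonneg hF (sub_nonneg.mpr hAB)

lemma trR_le_one {F ρ : Matrix d d ℂ} (hρ : IsState ρ) (hF : F ≤ 1) : trR F ρ ≤ 1 := by
  have := trR_mono hρ.1.nonneg hF
  rwa [trR_comm, trR_comm ρ, trR_one, hρ.2, Complex.one_re] at this

lemma isPOVMElem_iff {F : Matrix d d ℂ} : IsPOVMElem F ↔ 0 ≤ F ∧ F ≤ 1 :=
  and_congr Matrix.nonneg_iff_posSemidef.symm Matrix.le_iff.symm

/-- For `0 ≤ A`, the projection onto the support of `A`. -/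
def Matrix.posProj (A : Matrix d d 𝕜) : Matrix d d 𝕜 :=
  cfc (fun x : ℝ => if 0 < x then 1 else 0) A

namespace Matrix

lemma continuousOn_real_spectrum (A : Matrix d d 𝕜) (g : ℝ → ℝ) :
    ContinuousOn g (spectrum ℝ A) :=
  A.finite_real_spectrum.continuousOn g

lemma isSelfAdjoint_posProj (A : Matrix d d 𝕜) : IsSelfAdjoint A.posProj :=
  cfc_predicate _ A

lemma posProj_nonneg (A : Matrix d d 𝕜) : 0 ≤ A.posProj :=
  cfc_nonneg fun x _ => by split_ifs <;> norm_num

lemma posProj_le_one (A : Matrix d d 𝕜) : A.posProj ≤ 1 :=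
  cfc_le_one _ _ fun x _ => by split_ifs <;> norm_num

lemma posProj_mul_posProj (A : Matrix d d 𝕜) : A.posProj * A.posProj = A.posProj := by
  rw [posProj, ← cfc_mul _ _ A (A.continuousOn_real_spectrum _) (A.continuousOn_real_spectrum _)]
  exact cfc_congr fun x _ => by split_ifs <;> simp

lemma posProj_mul_self (A : Matrix d d 𝕜) (hA : IsSelfAdjoint A) :
    A.posProj * A = cfc (fun x : ℝ => max x 0) A := by
  nth_rw 2 [← cfc_id' ℝ A]
  rw [posProj, ← cfc_mul _ _ A (A.continuousOn_real_spectrum _) (A.continuousOn_real_spectrum _)]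
  refine cfc_congr fun x _ => ?_
  split_ifs with hx
  · simp [hx.le]
  · simp [not_lt.mp hx]

lemma mul_one_sub_posProj {A : Matrix d d 𝕜} (hA : 0 ≤ A) : A * (1 - A.posProj) = 0 := by
  calc A * (1 - A.posProj) = cfc (fun x : ℝ => x * (1 - if 0 < x then 1 else 0)) A := by
        rw [cfc_mul _ _ A (A.continuousOn_real_spectrum _) (A.continuousOn_real_spectrum _),
          cfc_id' ℝ A, cfc_sub _ _ A (A.continuousOn_real_spectrum _)
            (A.continuousOn_real_spectrum _), cfc_const_one ℝ A, posProj]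
    _ = cfc (0 : ℝ → ℝ) A := cfc_congr fun x hx => by
        have := spectrum_nonneg_of_nonneg hA hx
        simp only [Pi.zero_apply]
        split_ifs <;> simp_all [le_antisymm_iff]
    _ = 0 := cfc_zero ℝ A

lemma exists_posProj_le_smul {A : Matrix d d 𝕜} (hA : 0 ≤ A) :
    ∃ c : ℝ, A.posProj ≤ c • A := by
  obtain ⟨M, hM⟩ := (A.finite_real_spectrum.image (·⁻¹)).bddAbove
  refine ⟨max M 1, ?_⟩
  rw [posProj, ← cfc_const_mul_id _ A]
  refine cfc_mono (fun x hx => ?_) (A.continuousOn_real_spectrum _)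
    (A.continuousOn_real_spectrum _)
  split_ifs with hx₀
  · have hxM : x⁻¹ ≤ max M 1 := (hM ⟨x, hx, rfl⟩).trans (le_max_left _ _)
    simpa [hx₀.ne'] using mul_le_mul_of_nonneg_right hxM hx₀.le
  · have := spectrum_nonneg_of_nonneg hA hx
    positivity

end Matrix

lemma SuppLE.exists_le_smul {ρ σ : Matrix d d ℂ} (h : SuppLE ρ σ) (hρ : 0 ≤ ρ) (hσ : 0 ≤ σ) :
    ∃ c : ℝ, ρ ≤ c • σ := by
  have hP := σ.isSelfAdjoint_posProj
  have hρP : ρ * σ.posProj = ρ := by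
    have := h.mul_eq_zero (Matrix.mul_one_sub_posProj hσ)
    rwa [Matrix.mul_sub, Matrix.mul_one, sub_eq_zero, eq_comm] at this
  have hPρ : σ.posProj * ρ = ρ := by
    simpa [hP.star_eq, hρ.isSelfAdjoint.star_eq] using congrArg star hρP
  obtain ⟨r, hr⟩ := ρ.finite_real_spectrum.bddAbove
  obtain ⟨c, hc⟩ := Matrix.exists_posProj_le_smul hσ
  refine ⟨max r 0 * c, ?_⟩
  calc ρ = star σ.posProj * ρ * σ.posProj := by rw [hP.star_eq, hPρ, hρP]
    _ ≤ star σ.posProj * algebraMap ℝ _ (max r 0) * σ.posProj :=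
        star_left_conjugate_le_conjugate
          (le_algebraMap_of_spectrum_le fun x hx => (hr hx).trans (le_max_left _ _)) _
    _ = max r 0 • σ.posProj := by
        rw [hP.star_eq, Algebra.algebraMap_eq_smul_one, mul_smul_comm,
          mul_one, smul_mul_assoc, σ.posProj_mul_posProj]
    _ ≤ max r 0 • c • σ := smul_le_smul_of_nonneg_left hc (le_max_right _ _)
    _ = (max r 0 * c) • σ := smul_smul _ _ _

lemma exists_isPOVMElem_trR_pos {Δ : Matrix d d ℂ} (hΔ : IsSelfAdjoint Δ) (htr : Δ.trace = 0)
    (hne : Δ ≠ 0) : ∃ F, IsPOVMElem F ∧ 0 < trR F Δ := by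
  refine ⟨Δ.posProj, isPOVMElem_iff.mpr ⟨Δ.posProj_nonneg, Δ.posProj_le_one⟩, ?_⟩
  set G := cfc (fun x : ℝ => max x 0) Δ with hG_def
  have hG : 0 ≤ G := cfc_nonneg fun x _ => le_max_right x 0
  have hG₀ : G ≠ 0 := by
    intro hG₀
    have hΔ₀ : Δ ≤ 0 := by
      calc Δ = cfc (fun x : ℝ => x - max x 0) Δ := by
            rw [cfc_sub _ _ Δ (Δ.continuousOn_real_spectrum _) (Δ.continuousOn_real_spectrum _),
              cfc_id' ℝ Δ, ← hG_def, hG₀, sub_zero]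
        _ ≤ 0 := cfc_nonpos _ _ fun x _ => sub_nonpos.mpr (le_max_left x 0)
    have := (neg_nonneg.mpr hΔ₀).posSemidef.trace_eq_zero_iff.mp
      (by rw [Matrix.trace_neg, htr, neg_zero])
    exact hne (neg_eq_zero.mp this)
  have htrG := hG.posSemidef.trace_nonneg.lt_of_ne
    (Ne.symm (mt hG.posSemidef.trace_eq_zero_iff.mp hG₀))
  rw [trR, Δ.posProj_mul_self hΔ]
  exact (Complex.lt_def.mp htrG).1

lemma le_obsDiv {ρ σ F : Matrix d d ℂ} (hρ : IsState ρ) (hσ : 0 ≤ σ) (hsupp : SuppLE ρ σ)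
    (hF : IsPOVMElem F) (hq : trR F σ ≠ 0) :
    trR F ρ * Real.logb 2 (trR F ρ / trR F σ) ≤ obsDiv ρ σ := by
  obtain ⟨c, hc⟩ := hsupp.exists_le_smul hρ.1.nonneg hσ
  refine le_csSup ⟨|Real.logb 2 c|, ?_⟩ ⟨F, hF, hq, rfl⟩
  rintro _ ⟨G, hG, hGσ, rfl⟩
  rw [isPOVMElem_iff] at hG
  refine Real.mul_logb_div_le_abs_logb one_lt_two (trR_nonneg hG.1 hρ.1.nonneg)
    (trR_le_one hρ hG.2) (hGσ.symm.lt_of_le (trR_nonneg hG.1 hσ)) ?_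
  simpa [trR_smul] using trR_mono hG.1 hc

lemma obsDiv_self (ρ : Matrix d d ℂ) : obsDiv ρ ρ = 0 := by
  refine le_antisymm (Real.sSup_nonpos ?_) (Real.sSup_nonneg ?_) <;>
  · rintro _ ⟨F, -, hF, rfl⟩
    simp [div_self hF]

lemma obsDiv_nonneg {ρ σ : Matrix d d ℂ} (hρ : IsState ρ) (hσ : IsState σ) (hsupp : SuppLE ρ σ) :
    0 ≤ obsDiv ρ σ := by
  have h₁ : IsPOVMElem (1 : Matrix d d ℂ) := isPOVMElem_iff.mpr ⟨zero_le_one, le_rfl⟩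
  simpa [trR_one, hρ.2, hσ.2] using le_obsDiv hρ hσ.1.nonneg hsupp h₁ (by simp [trR_one, hσ.2])

lemma obsDiv_pos {ρ σ : Matrix d d ℂ} (hρ : IsState ρ) (hσ : IsState σ) (hsupp : SuppLE ρ σ)
    (hne : ρ ≠ σ) : 0 < obsDiv ρ σ := by
  obtain ⟨F, hF, hpos⟩ := exists_isPOVMElem_trR_pos (hρ.1.isHermitian.sub hσ.1.isHermitian)
    (by rw [Matrix.trace_sub, hρ.2, hσ.2, sub_self]) (sub_ne_zero.mpr hne)
  rw [trR_sub, sub_pos] at hpos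
  have hF₀ := (isPOVMElem_iff.mp hF).1
  obtain ⟨c, hc⟩ := hsupp.exists_le_smul hρ.1.nonneg hσ.1.nonneg
  have hq : 0 < trR F σ := by
    refine (trR_nonneg hF₀ hσ.1.nonneg).lt_of_ne fun hq => ?_
    have := trR_mono hF₀ hc
    rw [trR_smul, ← hq, mul_zero] at this
    linarith
  refine lt_of_lt_of_le ?_ (le_obsDiv hρ hσ.1.nonneg hsupp hF hq.ne')
  exact mul_pos (hq.trans hpos) (Real.logb_pos one_lt_two ((one_lt_div hq).mpr hpos))

end

/-- Nonnegativity and faithfulness of observational divergence. -/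
theorem obsDiv_nonneg_and_faithful {n : ℕ} (ρ σ : Matrix (Fin n) (Fin n) ℂ)
    (hρ : IsState ρ) (hσ : IsState σ) (hsupp : SuppLE ρ σ) :
    0 ≤ obsDiv ρ σ ∧ (obsDiv ρ σ = 0 ↔ ρ = σ) := by
  refine ⟨obsDiv_nonneg hρ hσ hsupp, fun h => ?_, fun h => h ▸ obsDiv_self ρ⟩
  by_contra hne
  exact (obsDiv_pos hρ hσ hsupp hne).ne' h

end
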